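/- For every positive integer n, the complete graph K_n admits an interval total coloring with w_τ(K_n) equal to n if n is odd and 3n/2 if n is even, and with maximum span W_τ(K_n) = 2n−1. -/

import Mathlib

/-! Every palette of an interval total coloring of `K_n` is an interval of `n` colors inside
`[1, t]`, so `n ≤ t`; palettes containing the colors `1` and `t` either coincide or share the
color of the edge joining their vertices, so `t ≤ 2n - 1`. For `n = 2m` and `t < 3m` every
palette contains `[m, 2m]`; a vertex colored `c` in that range would make the `c`-colored edges
a perfect matching of the other `2m - 1` vertices, so the `2m` distinct vertex colors avoid
`[m, 2m]`, forcing `t ≥ 3m`.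

Conversely, a symmetric matrix `χ` with distinct diagonal entries whose rows are injections into
intervals of length `n` is an interval total coloring (`χ v v` colors the vertex `v`, `χ u v` the
edge `uv`): each row fills its interval. The matrices `u + v + 1`, `(u + v) mod n + 1` for odd
`n`, and `evenColor` for `n = 2m` realise `2n - 1`, `n` and `3m`. -/

namespace ITC

variable {V : Type*}

/-- A total coloring: proper on vertices, edges, and incident vertex-edge pairs. -/
def IsTotalColoring (G : SimpleGraph V) (cv : V → ℕ) (ce : Sym2 V → ℕ) : Prop :=
  (∀ u v, G.Adj u v → cv u ≠ cv v) ∧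
  (∀ e f, e ∈ G.edgeSet → f ∈ G.edgeSet → e ≠ f → (∃ w, w ∈ e ∧ w ∈ f) → ce e ≠ ce f) ∧
  (∀ v e, e ∈ G.edgeSet → v ∈ e → cv v ≠ ce e)

/-- The set of colors on a vertex `v` together with its incident edges. -/
def palette (G : SimpleGraph V) (cv : V → ℕ) (ce : Sym2 V → ℕ) (v : V) : Set ℕ :=
  insert (cv v) {c | ∃ e ∈ G.edgeSet, v ∈ e ∧ ce e = c}

/-- Degree of a vertex. -/
noncomputable def deg (G : SimpleGraph V) (v : V) : ℕ := (G.neighborSet v).ncard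

/-- An interval total `t`-coloring. -/
def IsIntervalTotalColoring (G : SimpleGraph V) (t : ℕ) (cv : V → ℕ)
    (ce : Sym2 V → ℕ) : Prop :=
  IsTotalColoring G cv ce ∧
  (∀ v, cv v ∈ Set.Icc 1 t) ∧ (∀ e ∈ G.edgeSet, ce e ∈ Set.Icc 1 t) ∧
  (∀ c ∈ Set.Icc 1 t, (∃ v, cv v = c) ∨ (∃ e ∈ G.edgeSet, ce e = c)) ∧
  (∀ v, ∃ a, palette G cv ce v = Set.Icc a (a + deg G v))

def HasIntervalTotalColoring (G : SimpleGraph V) (t : ℕ) : Prop :=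
  ∃ cv ce, IsIntervalTotalColoring G t cv ce

/-- Minimum span of interval total colorings. -/
noncomputable def wtau (G : SimpleGraph V) : ℕ := sInf {t | HasIntervalTotalColoring G t}

/-- Maximum span of interval total colorings. -/
noncomputable def Wtau (G : SimpleGraph V) : ℕ := sSup {t | HasIntervalTotalColoring G t}

/-- Total chromatic number: least `k` such that there is a total coloring
with colors in `{1, …, k}`. -/
noncomputable def totalChromaticNumber (G : SimpleGraph V) : ℕ :=
  sInf {k | ∃ cv ce, IsTotalColoring G cv ce ∧ (∀ v, cv v ∈ Set.Icc 1 k) ∧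
    ∀ e ∈ G.edgeSet, ce e ∈ Set.Icc 1 k}

/-- A proper edge coloring. -/
def IsProperEdgeColoring (G : SimpleGraph V) (ce : Sym2 V → ℕ) : Prop :=
  ∀ e f, e ∈ G.edgeSet → f ∈ G.edgeSet → e ≠ f → (∃ w, w ∈ e ∧ w ∈ f) → ce e ≠ ce f

/-- Colors appearing on the edges incident to `v`. -/
def edgePalette (G : SimpleGraph V) (ce : Sym2 V → ℕ) (v : V) : Set ℕ :=
  {c | ∃ e ∈ G.edgeSet, v ∈ e ∧ ce e = c}

/-- An interval (edge) `t`-coloring. -/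
def IsIntervalEdgeColoring (G : SimpleGraph V) (t : ℕ) (ce : Sym2 V → ℕ) : Prop :=
  IsProperEdgeColoring G ce ∧
  (∀ e ∈ G.edgeSet, ce e ∈ Set.Icc 1 t) ∧
  (∀ c ∈ Set.Icc 1 t, ∃ e ∈ G.edgeSet, ce e = c) ∧
  (∀ v, ∃ a, edgePalette G ce v = Set.Icc (a + 1) (a + deg G v))

/-- The hypercube `Q_n`. -/
def hypercube (n : ℕ) : SimpleGraph (Fin n → Bool) where
  Adj u v := ∃! i, u i ≠ v i
  symm := by
    constructor
    rintro u v ⟨i, hi, hu⟩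
    exact ⟨i, Ne.symm hi, fun j hj => hu j (Ne.symm hj)⟩
  loopless := by
    constructor
    rintro u ⟨i, hi, -⟩
    exact hi rfl

/-- The complete graph on `Fin (2*r)` minus the perfect matching joining `i` and `i+r`. -/
def Kminus (r : ℕ) : SimpleGraph (Fin (2 * r)) where
  Adj i j := i ≠ j ∧ ¬((i : ℕ) + r = (j : ℕ) ∨ (j : ℕ) + r = (i : ℕ))
  symm := by
    constructor
    rintro i j ⟨h1, h2⟩
    exact ⟨h1.symm, fun h => h2 h.symm⟩
  loopless := by
    constructor
    rintro i ⟨h1, -⟩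
    exact h1 rfl

/-- Blow up each vertex of `H` into a copy of `β` (no edges inside copies). -/
def blowup {α : Type*} (H : SimpleGraph α) (β : Type*) : SimpleGraph (α × β) where
  Adj u v := H.Adj u.1 v.1
  symm := ⟨fun _ _ h => H.adj_symm h⟩
  loopless := ⟨fun u h => H.irrefl h⟩

section General

variable {G : SimpleGraph V} {t : ℕ} {cv : V → ℕ} {ce : Sym2 V → ℕ}

lemma palette_eq (G : SimpleGraph V) (cv : V → ℕ) (ce : Sym2 V → ℕ) (v : V) :
    palette G cv ce v = insert (cv v) ((fun w => ce s(v, w)) '' G.neighborSet v) := by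
  refine congrArg (insert (cv v)) (Set.ext fun c => ⟨?_, ?_⟩)
  · rintro ⟨e, he, hv, rfl⟩
    obtain ⟨w, rfl⟩ := Sym2.mem_iff_exists.1 hv
    exact ⟨w, he, rfl⟩
  · rintro ⟨w, hw, rfl⟩
    exact ⟨s(v, w), hw, Sym2.mem_mk_left v w, rfl⟩

lemma mem_palette_of_adj {u v : V} (h : G.Adj u v) : ce s(u, v) ∈ palette G cv ce u := by
  rw [palette_eq]
  exact Set.mem_insert_of_mem _ ⟨v, h, rfl⟩

namespace IsIntervalTotalColoring

lemma palette_subset (h : IsIntervalTotalColoring G t cv ce) (v : V) :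
    palette G cv ce v ⊆ Set.Icc 1 t := by
  rintro c (rfl | ⟨e, he, -, rfl⟩)
  · exact h.2.1 v
  · exact h.2.2.1 e he

lemma exists_palette_eq_Icc (h : IsIntervalTotalColoring G t cv ce) (v : V) :
    ∃ a, palette G cv ce v = Set.Icc a (a + deg G v) ∧ 1 ≤ a ∧ a + deg G v ≤ t := by
  obtain ⟨a, ha⟩ := h.2.2.2.2 v
  have hsub := ha ▸ h.palette_subset v
  exact ⟨a, ha, (hsub ⟨le_rfl, le_self_add⟩).1, (hsub ⟨le_add_right le_rfl, le_rfl⟩).2⟩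

lemma deg_lt (h : IsIntervalTotalColoring G t cv ce) (v : V) : deg G v < t := by
  obtain ⟨a, -, ha, hat⟩ := h.exists_palette_eq_Icc v
  omega

lemma exists_mem_palette (h : IsIntervalTotalColoring G t cv ce) {c : ℕ}
    (hc : c ∈ Set.Icc 1 t) : ∃ v, c ∈ palette G cv ce v := by
  rcases h.2.2.2.1 c hc with ⟨v, rfl⟩ | ⟨e, he, rfl⟩
  · exact ⟨v, Set.mem_insert _ _⟩
  · induction e with
    | _ u w => exact ⟨u, mem_palette_of_adj he⟩

end IsIntervalTotalColoring

def colorClass (G : SimpleGraph V) (ce : Sym2 V → ℕ) (c : ℕ) : G.Subgraph where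
  verts := {u | ∃ w, G.Adj u w ∧ ce s(u, w) = c}
  Adj u w := G.Adj u w ∧ ce s(u, w) = c
  adj_sub h := h.1
  edge_vert h := ⟨_, h⟩
  symm := ⟨fun _ _ h => ⟨h.1.symm, Sym2.eq_swap ▸ h.2⟩⟩

lemma IsProperEdgeColoring.isMatching_colorClass (hce : IsProperEdgeColoring G ce) (c : ℕ) :
    (colorClass G ce c).IsMatching := by
  intro u (hu : ∃ w, G.Adj u w ∧ ce s(u, w) = c)
  obtain ⟨w, hw⟩ := hu
  refine ⟨w, hw, fun w' hw' => by_contra fun hne => ?_⟩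
  refine hce _ _ hw'.1 hw.1 (fun heq => hne (Sym2.congr_right.1 heq)) ?_ (hw'.2.trans hw.2.symm)
  exact ⟨u, Sym2.mem_mk_left _ _, Sym2.mem_mk_left _ _⟩

lemma IsProperEdgeColoring.even_ncard_colorClass [Finite V] (hce : IsProperEdgeColoring G ce)
    (c : ℕ) : Even (colorClass G ce c).verts.ncard := by
  classical
  have := Fintype.ofFinite V
  rw [Set.ncard_eq_toFinset_card']
  exact (hce.isMatching_colorClass c).even_card

end General

section Complete

variable [Finite V] {t : ℕ} {cv : V → ℕ} {ce : Sym2 V → ℕ}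

lemma deg_top (v : V) : deg (⊤ : SimpleGraph V) v = Nat.card V - 1 := by
  rw [deg, SimpleGraph.neighborSet_top, Set.ncard_compl, Set.ncard_singleton]

namespace IsIntervalTotalColoring

lemma card_le (h : IsIntervalTotalColoring (⊤ : SimpleGraph V) t cv ce) : Nat.card V ≤ t := by
  rcases isEmpty_or_nonempty V with hV | ⟨⟨v⟩⟩
  · simp
  · have := h.deg_lt v
    rw [deg_top] at this
    omega

lemma le_two_mul_card_sub_one (h : IsIntervalTotalColoring (⊤ : SimpleGraph V) t cv ce) :
    t ≤ 2 * Nat.card V - 1 := by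
  rcases Nat.eq_zero_or_pos t with rfl | ht
  · exact Nat.zero_le _
  obtain ⟨u, hu⟩ := h.exists_mem_palette (c := 1) ⟨le_rfl, ht⟩
  obtain ⟨v, hv⟩ := h.exists_mem_palette (c := t) ⟨ht, le_rfl⟩
  obtain ⟨a, ha, -, -⟩ := h.exists_palette_eq_Icc u
  rw [ha, deg_top, Set.mem_Icc] at hu
  have : 0 < Nat.card V := Nat.card_pos_iff.2 ⟨⟨u⟩, inferInstance⟩
  by_cases huv : u = v
  · subst huv
    rw [ha, deg_top, Set.mem_Icc] at hv
    omega
  obtain ⟨b, hb, -, -⟩ := h.exists_palette_eq_Icc v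
  rw [hb, deg_top, Set.mem_Icc] at hv
  have hcu := mem_palette_of_adj (G := ⊤) (cv := cv) (ce := ce) huv
  have hcv := mem_palette_of_adj (G := ⊤) (cv := cv) (ce := ce) (Ne.symm huv)
  rw [ha, deg_top, Set.mem_Icc] at hcu
  rw [hb, deg_top, Sym2.eq_swap, Set.mem_Icc] at hcv
  omega

lemma three_mul_le {m : ℕ} (hV : Nat.card V = 2 * m)
    (h : IsIntervalTotalColoring (⊤ : SimpleGraph V) t cv ce) : 3 * m ≤ t := by
  by_contra! ht
  have hmid : ∀ v, ∀ c ∈ Set.Icc m (2 * m), c ∈ palette ⊤ cv ce v := by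
    intro v c ⟨hcm, hcm2⟩
    obtain ⟨a, ha, ha1, hat⟩ := h.exists_palette_eq_Icc v
    rw [deg_top, hV] at ha hat
    rw [ha]
    exact ⟨by omega, by omega⟩
  have hinj : Function.Injective cv := fun u v huv => by_contra fun hne => h.1.1 u v hne huv
  have hout : ∀ v, cv v ∉ Set.Icc m (2 * m) := by
    intro v hv
    have hverts : (colorClass ⊤ ce (cv v)).verts = {v}ᶜ := by
      ext u
      refine ⟨?_, fun hu => ?_⟩
      · rintro ⟨w, hw, hc⟩ rfl
        exact h.1.2.2 u s(u, w) hw (Sym2.mem_mk_left u w) hc.symm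
      · rcases (palette_eq _ _ _ u ▸ hmid u (cv v) hv) with hc | ⟨w, hw, hc⟩
        · exact absurd (hinj hc.symm) hu
        · exact ⟨w, hw, hc⟩
    have heven := IsProperEdgeColoring.even_ncard_colorClass h.1.2.1 (cv v)
    rw [hverts, Set.ncard_compl, Set.ncard_singleton, hV] at heven
    obtain ⟨k, hk⟩ := heven
    omega
  have hsub : Set.range cv ⊆ Set.Icc 1 (m - 1) ∪ Set.Icc (2 * m + 1) t := by
    rintro _ ⟨v, rfl⟩
    have := h.2.1 v
    have := hout v
    simp only [Set.mem_union, Set.mem_Icc] at *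
    omega
  have hcard := (Set.ncard_le_ncard hsub).trans (Set.ncard_union_le _ _)
  rw [Set.ncard_range_of_injective hinj, hV, Set.ncard_Icc_nat, Set.ncard_Icc_nat] at hcard
  omega

end IsIntervalTotalColoring

lemma hasIntervalTotalColoring_top_of_rows (χ : V → V → ℕ) (A : V → ℕ)
    (hsymm : ∀ u v, χ u v = χ v u) (hdiag : Function.Injective fun v => χ v v)
    (hrow : ∀ v, Function.Injective (χ v))
    (hmaps : ∀ v u, χ v u ∈ Set.Icc (A v) (A v + (Nat.card V - 1)))
    (hrange : ∀ v, 1 ≤ A v ∧ A v + (Nat.card V - 1) ≤ t)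
    (hcover : ∀ c ∈ Set.Icc 1 t, ∃ v, c ∈ Set.Icc (A v) (A v + (Nat.card V - 1))) :
    HasIntervalTotalColoring (⊤ : SimpleGraph V) t := by
  let ce : Sym2 V → ℕ := Sym2.lift ⟨χ, hsymm⟩
  have hpal : ∀ v, palette ⊤ (fun v => χ v v) ce v = Set.range (χ v) := fun v => by
    rw [palette_eq, SimpleGraph.neighborSet_top]
    exact Set.insert_image_compl_eq_range _ _
  have hpal_Icc : ∀ v, palette ⊤ (fun v => χ v v) ce v
      = Set.Icc (A v) (A v + (Nat.card V - 1)) := fun v => by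
    have : 0 < Nat.card V := Nat.card_pos_iff.2 ⟨⟨v⟩, inferInstance⟩
    rw [hpal]
    refine Set.eq_of_subset_of_ncard_le (Set.range_subset_iff.2 (hmaps v)) ?_
    rw [Set.ncard_Icc_nat, Set.ncard_range_of_injective (hrow v)]
    omega
  refine ⟨fun v => χ v v, ce, ⟨⟨fun u v huv => hdiag.ne huv, ?_, ?_⟩, ?_, ?_, ?_, ?_⟩⟩
  · rintro e f - - hne ⟨w, hwe, hwf⟩
    obtain ⟨x, rfl⟩ := Sym2.mem_iff_exists.1 hwe
    obtain ⟨y, rfl⟩ := Sym2.mem_iff_exists.1 hwf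
    exact (hrow w).ne fun hxy => hne (by subst hxy; rfl)
  · intro v e he hv
    obtain ⟨u, rfl⟩ := Sym2.mem_iff_exists.1 hv
    exact (hrow v).ne ((SimpleGraph.mem_edgeSet _).1 he).ne
  · intro v
    exact ⟨(hrange v).1.trans (hmaps v v).1, (hmaps v v).2.trans (hrange v).2⟩
  · intro e _
    induction e with
    | _ u v => exact ⟨(hrange u).1.trans (hmaps u v).1, (hmaps u v).2.trans (hrange u).2⟩
  · intro c hc
    obtain ⟨v, hv⟩ := hcover c hc
    obtain ⟨u, rfl⟩ := (hpal v).symm ▸ (hpal_Icc v).symm ▸ hv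
    by_cases huv : v = u
    · exact Or.inl ⟨v, huv ▸ rfl⟩
    · exact Or.inr ⟨s(v, u), huv, rfl⟩
  · intro v
    exact ⟨A v, by rw [hpal_Icc, deg_top]⟩

end Complete

lemma hasIntervalTotalColoring_top_two_mul_sub_one (n : ℕ) :
    HasIntervalTotalColoring (⊤ : SimpleGraph (Fin n)) (2 * n - 1) := by
  refine hasIntervalTotalColoring_top_of_rows (fun u v => u + v + 1) (fun v => v + 1)
    (fun u v => by omega) (fun u v h => Fin.ext (by simp only at h; omega))
    (fun v a b h => Fin.ext (by simp only at h; omega)) (fun v u => ?_) (fun v => ?_) ?_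
    <;> simp only [Nat.card_fin, Set.mem_Icc]
  · omega
  · omega
  · intro c hc
    by_cases hcn : c ≤ n
    · exact ⟨⟨0, by omega⟩, by simp only; omega⟩
    · exact ⟨⟨c - n, by omega⟩, by simp only; omega⟩

lemma hasIntervalTotalColoring_top_of_odd {n : ℕ} (hn : Odd n) :
    HasIntervalTotalColoring (⊤ : SimpleGraph (Fin n)) n := by
  have hpos : 0 < n := hn.pos
  refine hasIntervalTotalColoring_top_of_rows (fun u v => (u + v : ℕ) % n + 1) (fun _ => 1)
    (fun u v => by simp only [Nat.add_comm]) (fun u v h => Fin.ext ?_)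
    (fun v a b h => Fin.ext ?_) (fun v u => ?_) (fun v => ?_) ?_
  · simp only [Nat.add_right_cancel_iff, ← two_mul] at h
    exact (Nat.ModEq.cancel_left_of_coprime (Nat.coprime_two_right.2 hn) h).eq_of_lt_of_lt
      u.isLt v.isLt
  · simp only [Nat.add_right_cancel_iff] at h
    exact (Nat.ModEq.add_left_cancel' _ h).eq_of_lt_of_lt a.isLt b.isLt
  · have := Nat.mod_lt (v + u : ℕ) hpos
    simp only [Nat.card_fin, Set.mem_Icc]
    omega
  · simp only [Nat.card_fin]
    omega
  · intro c hc
    exact ⟨⟨0, hpos⟩, by simpa [Nat.card_fin, Nat.add_sub_cancel' hpos] using hc⟩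

def evenEdgeColor (m x y : ℕ) : ℕ :=
  if m ≤ x ∧ m ≤ y then x + y + 3 - 2 * m else x + y + 2

/-- Vertex `2m - 1` plays the role of `∞`. Among the other vertices the edge `xy` gets
`x + y + 2`, lowered by `2m - 1` when both ends are `≥ m`; the edge `x∞` gets the value of that
formula at `y = x`; each vertex gets the one color its palette interval still lacks. -/
def evenColor (m x y : ℕ) : ℕ :=
  if x = y then (if x = 2 * m - 1 then 2 * m + 1 else if x < m then x + 1 else x + m + 2)
  else if x = 2 * m - 1 then evenEdgeColor m y y
  else if y = 2 * m - 1 then evenEdgeColor m x x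
  else evenEdgeColor m x y

def evenPaletteStart (m x : ℕ) : ℕ :=
  if x = 2 * m - 1 then 2 else if x < m then x + 1 else x + 3 - m

lemma hasIntervalTotalColoring_top_three_mul (m : ℕ) :
    HasIntervalTotalColoring (⊤ : SimpleGraph (Fin (2 * m))) (3 * m) := by
  refine hasIntervalTotalColoring_top_of_rows (fun u v => evenColor m u v)
    (fun v => evenPaletteStart m v) (fun u v => ?_) (fun u v h => Fin.ext ?_)
    (fun v a b h => Fin.ext ?_) (fun v u => ?_) (fun v => ?_) ?_
  · unfold evenColor evenEdgeColor
    split_ifs <;> omega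
  · have := u.isLt; have := v.isLt
    dsimp only at h
    revert h
    unfold evenColor
    split_ifs <;> omega
  · have := v.isLt; have := a.isLt; have := b.isLt
    dsimp only at h
    revert h
    unfold evenColor evenEdgeColor
    split_ifs <;> omega
  · have := v.isLt; have := u.isLt
    simp only [Nat.card_fin, Set.mem_Icc]
    unfold evenColor evenEdgeColor evenPaletteStart
    split_ifs <;> omega
  · have := v.isLt
    simp only [Nat.card_fin]
    unfold evenPaletteStart
    split_ifs <;> omega
  · rintro c ⟨hc1, hc2⟩
    simp only [Nat.card_fin, Set.mem_Icc]
    by_cases hcm : c ≤ 2 * m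
    · exact ⟨⟨0, by omega⟩, by simp only [evenPaletteStart]; split_ifs <;> omega⟩
    by_cases hcm' : c = 2 * m + 1
    · exact ⟨⟨2 * m - 1, by omega⟩, by simp only [evenPaletteStart]; split_ifs <;> omega⟩
    · exact ⟨⟨c - m - 2, by omega⟩, by simp only [evenPaletteStart]; split_ifs <;> omega⟩

theorem stmt14_general (n : ℕ) :
    (∃ t, HasIntervalTotalColoring (⊤ : SimpleGraph (Fin n)) t) ∧
    wtau (⊤ : SimpleGraph (Fin n)) = (if Odd n then n else 3 * n / 2) ∧
    Wtau (⊤ : SimpleGraph (Fin n)) = 2 * n - 1 := by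
  have hmax := hasIntervalTotalColoring_top_two_mul_sub_one n
  refine ⟨⟨_, hmax⟩, ?_, IsGreatest.csSup_eq ⟨hmax, fun t ⟨_, _, h⟩ => ?_⟩⟩
  · split_ifs with hn
    · refine IsLeast.csInf_eq ⟨hasIntervalTotalColoring_top_of_odd hn, fun t ⟨_, _, h⟩ => ?_⟩
      simpa using h.card_le
    · obtain ⟨m, rfl⟩ := Nat.not_odd_iff_even.1 hn
      rw [← two_mul, show 3 * (2 * m) / 2 = 3 * m by omega]
      exact IsLeast.csInf_eq ⟨hasIntervalTotalColoring_top_three_mul m,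
        fun t ⟨_, _, h⟩ => h.three_mul_le (Nat.card_fin _)⟩
  · simpa using h.le_two_mul_card_sub_one

theorem stmt14 (n : ℕ) (hn : 0 < n) :
    (∃ t, HasIntervalTotalColoring (⊤ : SimpleGraph (Fin n)) t) ∧
    wtau (⊤ : SimpleGraph (Fin n)) = (if Odd n then n else 3 * n / 2) ∧
    Wtau (⊤ : SimpleGraph (Fin n)) = 2 * n - 1 :=
  stmt14_general n

end ITC
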